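/- In the maximum-matching construction with partial assignment g*: if MFN(g*,x*,y') is feasible, then there exists a feasible flow f = (f_j)_{j∈D} for MFN(g*,x*,y') such that for every client k ∈ D \ D_H, every arc incident to the node k^s carries zero flow of every commodity, i.e., f_j(a) = 0 for all j ∈ D and all arcs a entering or leaving k^s. -/

import Mathlib

/-!
Formalization of statements from "An LP-rounding approach to capacitated facility location".

`F` is the (finite) type of facilities, `D` the type of clients, `U i` the (positive integer)
capacity of facility `i`.  The multi-commodity flow network `MFN(g, x, y)` has nodes
`j^s, j^t` for clients `j` and `i, i'` for facilities `i`; its arcs and capacities are as in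
`MFNArc` / `mfnCap` below.
-/

open scoped BigOperators Classical

/-- Arcs of the multi-commodity flow network `MFN`:
`mid i` is the arc `(i, i')`, `sx j i` is `(j^s, i)`, `gs i j` is `(i, j^s)`,
and `ft i j` is `(i', j^t)`. -/
inductive MFNArc (F D : Type) where
  | mid : F → MFNArc F D
  | sx  : D → F → MFNArc F D
  | gs  : F → D → MFNArc F D
  | ft  : F → D → MFNArc F D
  deriving DecidableEq, Fintype

/-- Nodes of the multi-commodity flow network `MFN`. -/
inductive MFNNode (F D : Type) where
  | src  : D → MFNNode F D
  | fac  : F → MFNNode F D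
  | fac' : F → MFNNode F D
  | sink : D → MFNNode F D
  deriving DecidableEq

variable {F D : Type}

/-- Tail (start node) of an arc. -/
def MFNArc.tail : MFNArc F D → MFNNode F D
  | .mid i => .fac i
  | .sx j _ => .src j
  | .gs i _ => .fac i
  | .ft i _ => .fac' i

/-- Head (end node) of an arc. -/
def MFNArc.head : MFNArc F D → MFNNode F D
  | .mid i => .fac' i
  | .sx _ i => .fac i
  | .gs _ j => .src j
  | .ft _ j => .sink j

variable [Fintype F] [Fintype D]

/-- Capacity of each arc of `MFN(g, x, y)`; the demand of client `j` is
`d j = 1 - ∑ i, g i j`. -/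
noncomputable def mfnCap (U : F → ℕ) (g x : F → D → ℝ) (y : F → ℝ) : MFNArc F D → ℝ
  | .mid i  => y i * ((U i : ℝ) - ∑ j, g i j)
  | .sx j i => x i j
  | .gs i j => g i j
  | .ft i j => y i * (1 - ∑ i', g i' j)

/-- Net outflow of a (single-commodity) flow `f` at node `v`. -/
noncomputable def netOutflow (f : MFNArc F D → ℝ) (v : MFNNode F D) : ℝ :=
  ∑ a ∈ Finset.univ.filter (fun a : MFNArc F D => a.tail = v), f a -
    ∑ a ∈ Finset.univ.filter (fun a : MFNArc F D => a.head = v), f a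

/-- `f = (f_j)_{j ∈ D}` is a feasible multi-commodity flow for `MFN(g, x, y)`:
each `f_j` is nonnegative, conserves flow at every node other than `j^s` and `j^t`,
has net outflow `d j = 1 - ∑ i, g i j` at `j^s`, and the total flow on every arc is
at most its capacity. -/
def IsFeasibleFlow (U : F → ℕ) (g x : F → D → ℝ) (y : F → ℝ)
    (f : D → MFNArc F D → ℝ) : Prop :=
  (∀ j a, 0 ≤ f j a) ∧
  (∀ (j : D) (v : MFNNode F D), v ≠ MFNNode.src j → v ≠ MFNNode.sink j →
      netOutflow (f j) v = 0) ∧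
  (∀ j : D, netOutflow (f j) (MFNNode.src j) = 1 - ∑ i, g i j) ∧
  (∀ a : MFNArc F D, ∑ j, f j a ≤ mfnCap U g x y a)

/-- The multi-commodity flow network `MFN(g, x, y)` is feasible. -/
def MFNFeasible (U : F → ℕ) (g x : F → D → ℝ) (y : F → ℝ) : Prop :=
  ∃ f : D → MFNArc F D → ℝ, IsFeasibleFlow U g x y f

/-- `g` is a valid partial (fractional) assignment of clients to facilities. -/
def ValidAssign (U : F → ℕ) (g : F → D → ℝ) : Prop :=
  (∀ i j, 0 ≤ g i j) ∧ (∀ j, ∑ i, g i j ≤ 1) ∧ (∀ i, ∑ j, g i j ≤ (U i : ℝ))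

/-- Arcs of the residual graph `H` of the fractional `b`-matching `z`: an arc from client
`j` to facility `i ∈ I` when `z i j < 2 * x i j`, and an arc from facility `i ∈ I` to
client `j` when `z i j > 0`. -/
def HStep (I : Finset F) (z x : F → D → ℝ) : F ⊕ D → F ⊕ D → Prop
  | Sum.inr j, Sum.inl i => i ∈ I ∧ z i j < 2 * x i j
  | Sum.inl i, Sum.inr j => i ∈ I ∧ 0 < z i j
  | _, _ => False

/-- Client `j` is unsaturated by the fractional matching `z`. -/
def Unsat (I : Finset F) (z : F → D → ℝ) (j : D) : Prop :=
  ∑ i ∈ I, z i j ≠ 1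

/-- Facility `i` belongs to `I_H`: it is reachable in `H` from some unsaturated client. -/
def InIH (I : Finset F) (z x : F → D → ℝ) (i : F) : Prop :=
  ∃ k : D, Unsat I z k ∧ Relation.ReflTransGen (HStep I z x) (Sum.inr k) (Sum.inl i)

/-- Client `j` belongs to `D_H`: it is reachable in `H` from some unsaturated client
(every unsaturated client itself belongs to `D_H`). -/
def InDH (I : Finset F) (z x : F → D → ℝ) (j : D) : Prop :=
  ∃ k : D, Unsat I z k ∧ Relation.ReflTransGen (HStep I z x) (Sum.inr k) (Sum.inr j)

/-!
A feasible flow of commodity `c` is a nonnegative combination of `c^s`–`c^t` walks. If such a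
walk enters a node `k^s` with `k ∉ D_H`, it does so along an arc `(i, k^s)` with `g*_{ik} > 0`,
which forces `i ∈ I \ I_H` (for `i ∈ I_H`, `z_{ik} > 0` would make `k` reachable in `H`). Cut the
walk there and finish it along `i → i' → c^t`. The arc `(i', c^t)` has capacity `d_c` because
`y'_i = 1`. The flow on `(i, i')` is bounded by what enters `i` from clients of `D_H`, i.e. by
`∑_{j ∈ D_H} x*_{ij}`; since `i ∉ I_H`, each such `j` has `x*_{ij} ≤ z_{ij}` (otherwise `j → i`
would be an arc of `H`) and `g*_{ij} = 0`, while `g*_{ij} = z_{ij}` for the other clients, so this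
bound is at most `U_i - ∑_j g*_{ij}`.
-/

section Walk

variable {α V : Type*} (tail head : α → V)

inductive IsWalk : V → List α → V → Prop
  | nil (v : V) : IsWalk v [] v
  | cons {u w : V} {a : α} {l : List α} (ha : tail a = u) (h : IsWalk (head a) l w) :
      IsWalk u (a :: l) w

variable {tail head}

theorem IsWalk.ne_nil {u w : V} {l : List α} (h : IsWalk tail head u l w) (huw : u ≠ w) :
    l ≠ [] := by
  rintro rfl
  cases h
  exact huw rfl

theorem IsWalk.forall_tail {p : V → Prop} {u w : V} {l : List α}
    (h : IsWalk tail head u l w) (hu : p u) (hl : ∀ a ∈ l, p (head a)) :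
    ∀ a ∈ l, p (tail a) := by
  induction h with
  | nil => simp
  | cons ha _ ih =>
    rw [List.forall_mem_cons] at hl ⊢
    exact ⟨ha ▸ hu, ih hl.1 hl.2⟩

def walkFlow [DecidableEq α] (l : List α) (a : α) : ℝ := l.count a

theorem walkFlow_nonneg [DecidableEq α] (l : List α) (a : α) : 0 ≤ walkFlow l a :=
  Nat.cast_nonneg _

@[simp] theorem walkFlow_nil [DecidableEq α] : walkFlow ([] : List α) = 0 := by
  ext; simp [walkFlow]

theorem walkFlow_cons [DecidableEq α] (a : α) (l : List α) :
    walkFlow (a :: l) = Pi.single a 1 + walkFlow l := by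
  ext b
  by_cases h : b = a
  · subst h; simp [walkFlow, add_comm]
  · simp [walkFlow, h, Ne.symm h]

theorem sub_smul_walkFlow_le_sub [DecidableEq α] (f : α → ℝ) (l : List α) {δ ε : ℝ}
    (h : δ ≤ ε) : f - ε • walkFlow l ≤ f - δ • walkFlow l := fun a => by
  have := mul_le_mul_of_nonneg_right h (walkFlow_nonneg l a)
  simp only [Pi.sub_apply, Pi.smul_apply, smul_eq_mul]
  linarith

theorem IsWalk.exists_reroute [DecidableEq α] {Bad : V → Prop} {R : α → List α} {E : Set α}
    {s t : V} {l : List α} (hl : IsWalk tail head s l t) (hs : ¬ Bad s)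
    (hR : ∀ b, Bad (head b) → ¬ Bad (tail b) →
      IsWalk tail head (tail b) (R b) t ∧ ∀ a ∈ R b, ¬ Bad (head a))
    (hE : ∀ b ∈ l, Bad (head b) → ¬ Bad (tail b) → ∀ a ∈ R b, a ∈ E) :
    ∃ l', IsWalk tail head s l' t ∧ (∀ a ∈ l', ¬ Bad (head a)) ∧
      ∀ a ∉ E, l'.count a ≤ l.count a := by
  induction hl with
  | nil v => exact ⟨[], .nil v, by simp, by simp⟩
  | @cons u w b l hb hl ih =>
    subst hb
    by_cases hbad : Bad (head b)
    · obtain ⟨hRw, hRbad⟩ := hR b hbad hs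
      refine ⟨R b, hRw, hRbad, fun a ha => ?_⟩
      have : a ∉ R b := fun h => ha (hE b List.mem_cons_self hbad hs a h)
      simp [List.count_eq_zero_of_not_mem this]
    · obtain ⟨l', hl', hbad', hcount⟩ :=
        ih hbad hR fun b' hb' => hE b' (List.mem_cons_of_mem _ hb')
      refine ⟨b :: l', .cons rfl hl', List.forall_mem_cons.2 ⟨hbad, hbad'⟩, fun a ha => ?_⟩
      simp only [List.count_cons]
      have := hcount a ha
      omega

end Walk

section Flow

open Finset

variable {α V : Type*} [Fintype α] [DecidableEq V] (tail head : α → V)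

noncomputable def netFlow : (α → ℝ) →ₗ[ℝ] V → ℝ where
  toFun f v := ∑ a with tail a = v, f a - ∑ a with head a = v, f a
  map_add' f g := by ext v; simp only [Pi.add_apply, Finset.sum_add_distrib]; ring
  map_smul' c f := by ext v; simp [Finset.mul_sum, mul_sub]

def IsFlow (s t : V) (d : ℝ) (f : α → ℝ) : Prop :=
  0 ≤ f ∧ netFlow tail head f = d • (Pi.single s 1 - Pi.single t 1)

variable {tail head}

theorem netFlow_single [DecidableEq α] (a : α) :
    netFlow tail head (Pi.single a 1) = Pi.single (tail a) 1 - Pi.single (head a) 1 := by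
  ext v
  simp [netFlow, Pi.single_apply, eq_comm]

theorem sum_mul_netFlow [Fintype V] (φ : V → ℝ) (f : α → ℝ) :
    ∑ v, φ v * netFlow tail head f v = ∑ a, f a * (φ (tail a) - φ (head a)) := by
  simp only [netFlow, LinearMap.coe_mk, AddHom.coe_mk, mul_sub, Finset.sum_sub_distrib,
    Finset.mul_sum, Finset.sum_filter]
  rw [Finset.sum_comm, Finset.sum_comm (s := Finset.univ (α := V))]
  simp [mul_comm]

theorem IsWalk.netFlow_walkFlow [DecidableEq α] {u w : V} {l : List α}
    (h : IsWalk tail head u l w) :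
    netFlow tail head (walkFlow l) = Pi.single u 1 - Pi.single w 1 := by
  induction h with
  | nil v => simp
  | cons ha _ ih => rw [walkFlow_cons, map_add, netFlow_single, ih, ha]; abel

theorem isFlow_zero (s t : V) : IsFlow tail head s t 0 0 := by
  simp [IsFlow]

theorem IsFlow.add {s t : V} {d e : ℝ} {f g : α → ℝ} (hf : IsFlow tail head s t d f)
    (hg : IsFlow tail head s t e g) : IsFlow tail head s t (d + e) (f + g) :=
  ⟨add_nonneg hf.1 hg.1, by rw [map_add, hf.2, hg.2, add_smul]⟩

theorem IsWalk.isFlow_smul_walkFlow [DecidableEq α] {s t : V} {l : List α}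
    (h : IsWalk tail head s l t) {δ : ℝ} (hδ : 0 ≤ δ) :
    IsFlow tail head s t δ (δ • walkFlow l) :=
  ⟨smul_nonneg hδ (walkFlow_nonneg l), by rw [map_smul, h.netFlow_walkFlow]⟩

theorem IsFlow.sub_walkFlow [DecidableEq α] {s t : V} {d δ : ℝ} {f : α → ℝ} {l : List α}
    (hf : IsFlow tail head s t d f) (hl : IsWalk tail head s l t)
    (hle : 0 ≤ f - δ • walkFlow l) : IsFlow tail head s t (d - δ) (f - δ • walkFlow l) :=
  ⟨hle, by rw [map_sub, map_smul, hf.2, hl.netFlow_walkFlow, sub_smul]⟩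

theorem IsFlow.netFlow_eq_zero {s t v : V} {d : ℝ} {f : α → ℝ} (hf : IsFlow tail head s t d f)
    (hs : v ≠ s) (ht : v ≠ t) : netFlow tail head f v = 0 := by
  simp [hf.2, hs, ht]

theorem IsFlow.netFlow_source {s t : V} {d : ℝ} {f : α → ℝ} (hf : IsFlow tail head s t d f)
    (hst : s ≠ t) : netFlow tail head f s = d := by
  simp [hf.2, hst]

theorem isFlow_of_netFlow [Fintype V] {s t : V} {d : ℝ} {f : α → ℝ} (hst : s ≠ t)
    (hf : 0 ≤ f) (hcons : ∀ v, v ≠ s → v ≠ t → netFlow tail head f v = 0)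
    (hs : netFlow tail head f s = d) : IsFlow tail head s t d f := by
  refine ⟨hf, funext fun v => ?_⟩
  have hsum : ∑ v, netFlow tail head f v = 0 := by
    simpa using sum_mul_netFlow (tail := tail) (head := head) (fun _ => 1) f
  rw [Finset.sum_eq_add s t hst (fun v _ hv => hcons v hv.1 hv.2) (by simp) (by simp), hs] at hsum
  by_cases hvs : v = s
  · subst hvs; simp [hs, hst]
  by_cases hvt : v = t
  · subst hvt; simp [hst.symm]; linarith
  simp [hcons v hvs hvt, hvs, hvt]

theorem IsFlow.exists_pos_walk [Fintype V] {s t : V} {d : ℝ} {f : α → ℝ}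
    (hf : IsFlow tail head s t d f) (hd : 0 < d) :
    ∃ l, IsWalk tail head s l t ∧ ∀ a ∈ l, 0 < f a := by
  let r : V → V → Prop := fun u w => ∃ a, 0 < f a ∧ tail a = u ∧ head a = w
  have walk_of_reach : ∀ u, Relation.ReflTransGen r u t →
      ∃ l, IsWalk tail head u l t ∧ ∀ a ∈ l, 0 < f a := by
    intro u hu
    induction hu using Relation.ReflTransGen.head_induction_on with
    | refl => exact ⟨[], .nil t, by simp⟩
    | head hr _ ih =>
      obtain ⟨a, ha, rfl, rfl⟩ := hr
      obtain ⟨l, hl, hpos⟩ := ih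
      exact ⟨a :: l, .cons rfl hl, List.forall_mem_cons.2 ⟨ha, hpos⟩⟩
  -- otherwise the nodes reachable along arcs carrying flow would have net outflow `d > 0`,
  -- although no flow leaves them
  refine walk_of_reach s ?_
  by_contra hst
  let φ : V → ℝ := fun v => if Relation.ReflTransGen r s v then 1 else 0
  have hterm : ∀ a, f a * (φ (tail a) - φ (head a)) ≤ 0 := by
    intro a
    by_cases hta : Relation.ReflTransGen r s (tail a)
    · rcases (hf.1 a).eq_or_lt with ha | ha
      · simp [← ha]
      · simp [φ, hta, hta.tail ⟨a, ha, rfl, rfl⟩]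
    · simp only [φ, hta, if_false, zero_sub, mul_neg, neg_nonpos]
      exact mul_nonneg (hf.1 a) (by split_ifs <;> norm_num)
  have hφ : ∑ v, φ v * netFlow tail head f v = d := by
    simp [hf.2, φ, Pi.single_apply, mul_sub, Finset.sum_sub_distrib, hst,
      Relation.ReflTransGen.refl]
  rw [sum_mul_netFlow] at hφ
  linarith [Finset.sum_nonpos fun a (_ : a ∈ Finset.univ) => hterm a]

theorem exists_card_pos_sub_walkFlow_lt [DecidableEq α] {f : α → ℝ} {l : List α}
    (hf : 0 ≤ f) (hl : l ≠ []) (hpos : ∀ a ∈ l, 0 < f a) :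
    ∃ ε : ℝ, 0 < ε ∧ 0 ≤ f - ε • walkFlow l ∧
      #{a | 0 < (f - ε • walkFlow l) a} < #{a | 0 < f a} := by
  have hw : ∀ a ∈ l, 0 < walkFlow l a := fun a ha => by
    simpa [walkFlow] using List.count_pos_iff.2 ha
  obtain ⟨a₀, ha₀, hmin⟩ :=
    l.toFinset.exists_min_image (fun a => f a / walkFlow l a) (by simpa using hl)
  rw [List.mem_toFinset] at ha₀
  set ε := f a₀ / walkFlow l a₀
  have hε : 0 < ε := div_pos (hpos a₀ ha₀) (hw a₀ ha₀)
  have hle : ∀ a, ε * walkFlow l a ≤ f a := by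
    intro a
    by_cases ha : a ∈ l
    · exact (le_div_iff₀ (hw a ha)).1 (hmin a (List.mem_toFinset.2 ha))
    · simpa [walkFlow, List.count_eq_zero_of_not_mem ha] using hf a
  refine ⟨ε, hε, fun a => by simpa using hle a, Finset.card_lt_card ?_⟩
  rw [Finset.ssubset_iff_of_subset]
  · exact ⟨a₀, by simp [hpos a₀ ha₀], by simp [ε, div_mul_cancel₀ _ (hw a₀ ha₀).ne']⟩
  · intro a
    simp only [Finset.mem_filter, Finset.mem_univ, true_and, Pi.sub_apply, Pi.smul_apply,
      smul_eq_mul]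
    have := mul_nonneg hε.le (walkFlow_nonneg l a)
    intro h; linarith

theorem IsFlow.exists_reroute [Fintype V] [DecidableEq α] {Bad : V → Prop} {R : α → List α}
    {E : Set α} {s t : V} {d : ℝ} {f : α → ℝ} (hf : IsFlow tail head s t d f) (hd : 0 ≤ d)
    (hst : s ≠ t) (hs : ¬ Bad s)
    (hR : ∀ b, Bad (head b) → ¬ Bad (tail b) →
      IsWalk tail head (tail b) (R b) t ∧ ∀ a ∈ R b, ¬ Bad (head a))
    (hE : ∀ b, 0 < f b → Bad (head b) → ¬ Bad (tail b) → ∀ a ∈ R b, a ∈ E) :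
    ∃ g, IsFlow tail head s t d g ∧ (∀ a, Bad (tail a) ∨ Bad (head a) → g a = 0) ∧
      ∀ a ∉ E, g a ≤ f a := by
  induction hn : #{a | 0 < f a} using Nat.strong_induction_on generalizing f d with
  | _ n ih =>
  rcases hd.eq_or_lt with rfl | hd
  · exact ⟨0, isFlow_zero s t, fun _ _ => rfl, fun a _ => hf.1 a⟩
  obtain ⟨l, hl, hpos⟩ := hf.exists_pos_walk hd
  obtain ⟨l', hl', hbad', hcount⟩ := hl.exists_reroute hs hR fun b hb => hE b (hpos b hb)
  obtain ⟨ε, hε, hfε, hlt⟩ := exists_card_pos_sub_walkFlow_lt hf.1 (hl.ne_nil hst) hpos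
  -- send `min d ε` along the rerouted walk `l'` and reroute the rest of `f` recursively
  obtain ⟨δ, g, hδ, hg, hgbad, hgE⟩ : ∃ δ g, 0 ≤ δ ∧ IsFlow tail head s t (d - δ) g ∧
      (∀ a, Bad (tail a) ∨ Bad (head a) → g a = 0) ∧
      ∀ a ∉ E, g a ≤ (f - δ • walkFlow l) a := by
    by_cases hdε : d ≤ ε
    · exact ⟨d, 0, hd.le, by simpa using isFlow_zero s t, fun _ _ => rfl,
        fun a _ => (hfε.trans (sub_smul_walkFlow_le_sub f l hdε)) a⟩
    · have hE' : ∀ b, 0 < (f - ε • walkFlow l) b → 0 < f b := fun b hb =>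
        hb.trans_le (by simpa using sub_smul_walkFlow_le_sub f l hε.le b)
      obtain ⟨g, hg⟩ := ih _ (hn ▸ hlt) (hf.sub_walkFlow hl hfε) (by linarith)
        (fun b hb => hE b (hE' b hb)) rfl
      exact ⟨ε, g, hε.le, hg⟩
  have hl'bad : ∀ a, Bad (tail a) ∨ Bad (head a) → walkFlow l' a = 0 := by
    intro a ha
    have hnot : a ∉ l' := fun hmem =>
      ha.elim (hl'.forall_tail (p := fun v => ¬ Bad v) hs hbad' a hmem) (hbad' a hmem)
    simp [walkFlow, List.count_eq_zero_of_not_mem hnot]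
  refine ⟨g + δ • walkFlow l', by simpa using hg.add (hl'.isFlow_smul_walkFlow hδ),
    fun a ha => by simp [hgbad a ha, hl'bad a ha], fun a ha => ?_⟩
  have hc : walkFlow l' a ≤ walkFlow l a := by
    simpa [walkFlow] using hcount a ha
  have := hgE a ha
  have := mul_le_mul_of_nonneg_left hc hδ
  simp only [Pi.add_apply, Pi.sub_apply, Pi.smul_apply, smul_eq_mul] at *
  linarith

end Flow

section Network

instance : Fintype (MFNNode F D) :=
  Fintype.ofEquiv ((D ⊕ F) ⊕ (F ⊕ D))
    { toFun := Sum.elim (Sum.elim .src .fac) (Sum.elim .fac' .sink)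
      invFun := fun
        | .src j => .inl (.inl j)
        | .fac i => .inl (.inr i)
        | .fac' i => .inr (.inl i)
        | .sink j => .inr (.inr j)
      left_inv := by rintro ((j | i) | (i | j)) <;> rfl
      right_inv := by rintro (j | i | i | j) <;> rfl }

theorem MFNArc.sum_univ (φ : MFNArc F D → ℝ) :
    ∑ a, φ a = ∑ i, φ (.mid i) + ∑ j, ∑ i, φ (.sx j i) + ∑ i, ∑ j, φ (.gs i j) +
      ∑ i, ∑ j, φ (.ft i j) := by
  let e : F ⊕ (D × F) ⊕ (F × D) ⊕ (F × D) ≃ MFNArc F D :=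
    { toFun := Sum.elim .mid (Sum.elim (fun p => .sx p.1 p.2)
        (Sum.elim (fun p => .gs p.1 p.2) (fun p => .ft p.1 p.2)))
      invFun := fun
        | .mid i => .inl i
        | .sx j i => .inr (.inl (j, i))
        | .gs i j => .inr (.inr (.inl (i, j)))
        | .ft i j => .inr (.inr (.inr (i, j)))
      left_inv := by rintro (i | ⟨j, i⟩ | ⟨i, j⟩ | ⟨i, j⟩) <;> rfl
      right_inv := by rintro (i | ⟨j, i⟩ | ⟨i, j⟩ | ⟨i, j⟩) <;> rfl }
  rw [← e.sum_comp]
  simp [e, Fintype.sum_sum_type, Fintype.sum_prod_type, add_assoc]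

theorem netOutflow_fac (f : MFNArc F D → ℝ) (i : F) :
    netOutflow f (.fac i) = f (.mid i) + ∑ j, f (.gs i j) - ∑ j, f (.sx j i) := by
  rw [netOutflow, Finset.sum_filter, Finset.sum_filter, MFNArc.sum_univ, MFNArc.sum_univ]
  simp [MFNArc.tail, MFNArc.head]

theorem netOutflow_sink (f : MFNArc F D → ℝ) (j : D) :
    netOutflow f (.sink j) = -∑ i, f (.ft i j) := by
  rw [netOutflow, Finset.sum_filter, Finset.sum_filter, MFNArc.sum_univ, MFNArc.sum_univ]
  simp [MFNArc.tail, MFNArc.head]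

end Network

section Matching

variable {F D : Type} {I : Finset F} {z x : F → D → ℝ} {i : F} {j : D}

theorem InIH.mem (h : InIH I z x i) : i ∈ I := by
  obtain ⟨k, -, hp⟩ := h
  rcases hp.cases_tail with h | ⟨_ | j, -, hj⟩
  · cases h
  · exact hj.elim
  · exact hj.1

theorem sum_eq_one_of_not_inDH (hj : ¬ InDH I z x j) : ∑ i ∈ I, z i j = 1 :=
  not_not.1 fun h => hj ⟨j, h, .refl⟩

theorem InIH.inDH (hi : InIH I z x i) (hz : 0 < z i j) : InDH I z x j := by
  have hiI := hi.mem
  obtain ⟨k, hk, hp⟩ := hi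
  exact ⟨k, hk, hp.tail (show HStep I z x (.inl i) (.inr j) from ⟨hiI, hz⟩)⟩

theorem InDH.inIH (hj : InDH I z x j) (hi : i ∈ I) (hz : z i j < 2 * x i j) : InIH I z x i := by
  obtain ⟨k, hk, hp⟩ := hj
  exact ⟨k, hk, hp.tail (show HStep I z x (.inr j) (.inl i) from ⟨hi, hz⟩)⟩

noncomputable def gStar (I : Finset F) (z x : F → D → ℝ) (i : F) (j : D) : ℝ :=
  if InIH I z x i then z i j else if i ∈ I ∧ ¬ InDH I z x j then z i j else 0

theorem gStar_of_not_inDH (hj : ¬ InDH I z x j) :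
    gStar I z x i j = if i ∈ I then z i j else 0 := by
  by_cases hi : InIH I z x i
  · simp [gStar, hi, hi.mem]
  · simp [gStar, hi, hj]

theorem gStar_le (hz0 : ∀ i j, 0 ≤ z i j) : gStar I z x i j ≤ if i ∈ I then z i j else 0 := by
  by_cases hi : i ∈ I
  · rw [if_pos hi, gStar]
    split_ifs <;> simp [hz0]
  · have hiH : ¬ InIH I z x i := fun h => hi h.mem
    simp [gStar, hi, hiH]

theorem sum_gStar_le_one [Fintype F] (hz0 : ∀ i j, 0 ≤ z i j)
    (hz1 : ∀ j, ∑ i ∈ I, z i j ≤ 1) (j : D) : ∑ i, gStar I z x i j ≤ 1 :=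
  calc ∑ i, gStar I z x i j ≤ ∑ i, if i ∈ I then z i j else 0 :=
        Finset.sum_le_sum fun i _ => gStar_le hz0
    _ = ∑ i ∈ I, z i j := by rw [Finset.sum_ite_mem, Finset.univ_inter]
    _ ≤ 1 := hz1 j

theorem sum_gStar_of_not_inDH [Fintype F] (hj : ¬ InDH I z x j) : ∑ i, gStar I z x i j = 1 := by
  simp_rw [gStar_of_not_inDH hj, Finset.sum_ite_mem, Finset.univ_inter]
  exact sum_eq_one_of_not_inDH hj

theorem gStar_pos (hj : ¬ InDH I z x j) (h : 0 < gStar I z x i j) :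
    i ∈ I ∧ ¬ InIH I z x i := by
  unfold gStar at h
  split_ifs at h with hi hi'
  · exact absurd (hi.inDH h) hj
  · exact ⟨hi'.1, hi⟩
  · exact absurd h (lt_irrefl 0)

theorem sum_inDH_add_sum_gStar_le [Fintype D] {U : F → ℕ} (hz0 : ∀ i j, 0 ≤ z i j)
    (hzU : ∀ i ∈ I, ∑ j, z i j ≤ (U i : ℝ)) (hi : i ∈ I) (hiH : ¬ InIH I z x i) :
    ∑ j, (if InDH I z x j then x i j else 0) + ∑ j, gStar I z x i j ≤ U i := by
  rw [← Finset.sum_add_distrib]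
  refine (Finset.sum_le_sum fun j _ => ?_).trans (hzU i hi)
  by_cases hj : InDH I z x j
  · have hxz : x i j ≤ z i j := by
      by_contra! h
      exact hiH (hj.inIH hi (by linarith [hz0 i j]))
    simp [gStar, hiH, hj, hxz]
  · simp [gStar_of_not_inDH hj, hi, hj]

end Matching

section Rerouting

theorem IsFlow.mid_le_sum_sx {c : D} {d : ℝ} {f : MFNArc F D → ℝ}
    (hf : IsFlow MFNArc.tail MFNArc.head (.src c) (.sink c) d f) (i : F) :
    f (.mid i) ≤ ∑ j, f (.sx j i) := by
  have h : netOutflow f (.fac i) = 0 := hf.netFlow_eq_zero (by simp) (by simp)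
  rw [netOutflow_fac] at h
  linarith [Finset.sum_nonneg fun j (_ : j ∈ Finset.univ) => hf.1 (.gs i j)]

theorem IsFlow.ft_le {c : D} {d : ℝ} {f : MFNArc F D → ℝ}
    (hf : IsFlow MFNArc.tail MFNArc.head (.src c) (.sink c) d f) (i : F) (j : D) :
    f (.ft i j) ≤ if j = c then d else 0 := by
  have h : netOutflow f (.sink j) = _ := congrFun hf.2 (.sink j)
  rw [netOutflow_sink] at h
  have hsum : ∑ i, f (.ft i j) = if j = c then d else 0 := by
    by_cases hj : j = c <;> simp [hj] at h ⊢ <;> linarith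
  exact hsum ▸ Finset.single_le_sum (fun i _ => hf.1 (.ft i j)) (Finset.mem_univ i)

variable (I : Finset F) (z x : F → D → ℝ) (c : D)

def reroutedArcs : Set (MFNArc F D) :=
  {a | ∃ i ∈ I, ¬ InIH I z x i ∧ (a = .mid i ∨ a = .ft i c)}

def shortcut : MFNArc F D → List (MFNArc F D)
  | .gs i _ => [.mid i, .ft i c]
  | _ => []

variable {I z x c}

theorem exists_isFlow_avoiding_not_inDH {f : MFNArc F D → ℝ}
    (hf : IsFlow MFNArc.tail MFNArc.head (.src c) (.sink c) (1 - ∑ i, gStar I z x i c) f)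
    (hc : ∑ i, gStar I z x i c ≤ 1) (hcap : ∀ i j, f (.gs i j) ≤ gStar I z x i j) :
    ∃ g, IsFlow MFNArc.tail MFNArc.head (.src c) (.sink c) (1 - ∑ i, gStar I z x i c) g ∧
      (∀ k, ¬ InDH I z x k → ∀ a : MFNArc F D, (a.tail = .src k ∨ a.head = .src k) → g a = 0) ∧
      ∀ a ∉ reroutedArcs I z x c, g a ≤ f a := by
  by_cases hcH : ¬ InDH I z x c
  · have hd : 1 - ∑ i, gStar I z x i c = 0 := by rw [sum_gStar_of_not_inDH hcH, sub_self]
    exact ⟨0, hd ▸ isFlow_zero _ _, fun _ _ _ _ => rfl, fun a _ => hf.1 a⟩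
  let Bad : MFNNode F D → Prop := fun v => ∃ k, v = .src k ∧ ¬ InDH I z x k
  have hR : ∀ b, Bad b.head → ¬ Bad b.tail → IsWalk MFNArc.tail MFNArc.head b.tail
      (shortcut c b) (.sink c) ∧ ∀ a ∈ shortcut c b, ¬ Bad a.head := by
    rintro (i | ⟨j, i⟩ | ⟨i, k⟩ | ⟨i, j⟩) ⟨k', hk', -⟩ - <;>
      simp only [MFNArc.head, reduceCtorEq] at hk'
    exact ⟨.cons rfl (.cons rfl (.nil _)), by simp [shortcut, Bad, MFNArc.head]⟩
  have hE : ∀ b, 0 < f b → Bad b.head → ¬ Bad b.tail →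
      ∀ a ∈ shortcut c b, a ∈ reroutedArcs I z x c := by
    rintro (i | ⟨j, i⟩ | ⟨i, k⟩ | ⟨i, j⟩) hb ⟨k', hk', hk⟩ - a ha <;>
      simp only [MFNArc.head, reduceCtorEq, MFNNode.src.injEq] at hk'
    subst hk'
    obtain ⟨hi, hiH⟩ := gStar_pos hk (hb.trans_le (hcap i k))
    simp only [shortcut, List.mem_cons, List.not_mem_nil, or_false] at ha
    exact ⟨i, hi, hiH, ha⟩
  obtain ⟨g, hg, hgBad, hgle⟩ :=
    hf.exists_reroute (by linarith) (by simp) (by simpa [Bad] using hcH) hR hE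
  exact ⟨g, hg, fun k hk a ha => hgBad a (ha.imp (⟨k, ·, hk⟩) (⟨k, ·, hk⟩)), hgle⟩

end Rerouting

section Capacity

variable {I : Finset F} {z x : F → D → ℝ}

theorem sum_mid_le_mfnCap {U : F → ℕ} {y : F → ℝ} (hy : ∀ i ∈ I, y i = 1)
    (hz0 : ∀ i j, 0 ≤ z i j) (hzU : ∀ i ∈ I, ∑ j, z i j ≤ (U i : ℝ)) {f' : D → MFNArc F D → ℝ}
    (hf' : ∀ c, IsFlow MFNArc.tail MFNArc.head (.src c) (.sink c)
      (1 - ∑ i, gStar I z x i c) (f' c)) {i : F} (hi : i ∈ I) (hiH : ¬ InIH I z x i)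
    (hsx : ∀ j, ∑ c, f' c (.sx j i) ≤ if InDH I z x j then x i j else 0) :
    ∑ c, f' c (.mid i) ≤ mfnCap U (gStar I z x) x y (.mid i) :=
  calc ∑ c, f' c (.mid i) ≤ ∑ c, ∑ j, f' c (.sx j i) :=
        Finset.sum_le_sum fun c _ => (hf' c).mid_le_sum_sx i
    _ = ∑ j, ∑ c, f' c (.sx j i) := Finset.sum_comm
    _ ≤ ∑ j, if InDH I z x j then x i j else 0 := Finset.sum_le_sum fun j _ => hsx j
    _ ≤ mfnCap U (gStar I z x) x y (.mid i) := by
      have := sum_inDH_add_sum_gStar_le hz0 hzU hi hiH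
      simp only [mfnCap, hy i hi, one_mul]
      linarith

theorem sum_le_mfnCap {U : F → ℕ} {y : F → ℝ} (hy : ∀ i ∈ I, y i = 1)
    (hz0 : ∀ i j, 0 ≤ z i j) (hzU : ∀ i ∈ I, ∑ j, z i j ≤ (U i : ℝ))
    {f f' : D → MFNArc F D → ℝ} (hcap : ∀ a, ∑ c, f c a ≤ mfnCap U (gStar I z x) x y a)
    (hf' : ∀ c, IsFlow MFNArc.tail MFNArc.head (.src c) (.sink c)
      (1 - ∑ i, gStar I z x i c) (f' c))
    (hbad : ∀ c k, ¬ InDH I z x k → ∀ a : MFNArc F D,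
      (a.tail = .src k ∨ a.head = .src k) → f' c a = 0)
    (hle : ∀ c, ∀ a ∉ reroutedArcs I z x c, f' c a ≤ f c a) (a : MFNArc F D) :
    ∑ c, f' c a ≤ mfnCap U (gStar I z x) x y a := by
  have hkept : (∀ c, a ∉ reroutedArcs I z x c) → ∑ c, f' c a ≤ mfnCap U (gStar I z x) x y a :=
    fun h => (Finset.sum_le_sum fun c _ => hle c a (h c)).trans (hcap a)
  cases a with
  | sx j i | gs i j => exact hkept fun c => by simp [reroutedArcs]
  | mid i =>
    by_cases hi : i ∈ I ∧ ¬ InIH I z x i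
    · refine sum_mid_le_mfnCap hy hz0 hzU hf' hi.1 hi.2 fun j => ?_
      by_cases hj : InDH I z x j
      · rw [if_pos hj]
        exact (Finset.sum_le_sum fun c _ => hle c _ (by simp [reroutedArcs])).trans (hcap _)
      · simp [hbad _ j hj (.sx j i) (.inl rfl), hj]
    · exact hkept fun c ⟨i', hi', hiH, h⟩ => by simp_all
  | ft i j =>
    by_cases hi : i ∈ I
    · calc ∑ c, f' c (.ft i j) ≤ ∑ c, if j = c then 1 - ∑ i, gStar I z x i c else 0 :=
            Finset.sum_le_sum fun c _ => (hf' c).ft_le i j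
        _ = mfnCap U (gStar I z x) x y (.ft i j) := by simp [mfnCap, hy i hi]
    · exact hkept fun c ⟨i', hi', hiH, h⟩ => by simp_all

end Capacity

theorem stmt_11_general
    (U : F → ℕ)
    (xstar : F → D → ℝ)
    (y' : F → ℝ)
    (I : Finset F) (hI : ∀ i, i ∈ I ↔ y' i = 1)
    (z : F → D → ℝ)
    (hz0 : ∀ i j, 0 ≤ z i j)
    (hz1 : ∀ j, ∑ i ∈ I, z i j ≤ 1)
    (hzU : ∀ i ∈ I, ∑ j, z i j ≤ (U i : ℝ))
    (gstar : F → D → ℝ)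
    (hgstar : ∀ i j, gstar i j =
      if InIH I z xstar i then z i j
      else if i ∈ I ∧ ¬ InDH I z xstar j then z i j else 0)
    (hfeas : MFNFeasible U gstar xstar y') :
    ∃ f : D → MFNArc F D → ℝ, IsFeasibleFlow U gstar xstar y' f ∧
      ∀ k : D, ¬ InDH I z xstar k → ∀ (j : D) (a : MFNArc F D),
        (MFNArc.tail a = MFNNode.src k ∨ MFNArc.head a = MFNNode.src k) →
        f j a = 0 := by
  obtain rfl : gstar = gStar I z xstar := funext₂ hgstar
  obtain ⟨f, hf0, hcons, hval, hcap⟩ := hfeas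
  have hflow : ∀ c, IsFlow MFNArc.tail MFNArc.head (.src c) (.sink c)
      (1 - ∑ i, gStar I z xstar i c) (f c) :=
    fun c => isFlow_of_netFlow (by simp) (hf0 c) (hcons c) (hval c)
  have hcap_gs : ∀ c i j, f c (.gs i j) ≤ gStar I z xstar i j := fun c i j =>
    (Finset.single_le_sum (fun c _ => hf0 c _) (Finset.mem_univ c)).trans (hcap (.gs i j))
  choose f' hf' hbad hle using fun c =>
    exists_isFlow_avoiding_not_inDH (hflow c) (sum_gStar_le_one hz0 hz1 c) (hcap_gs c)
  refine ⟨f', ⟨fun c => (hf' c).1, fun c v hs ht => (hf' c).netFlow_eq_zero hs ht,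
    fun c => (hf' c).netFlow_source (by simp),
    sum_le_mfnCap (fun i hi => (hI i).1 hi) hz0 hzU hcap hf' hbad hle⟩,
    fun k hk c a ha => hbad c k hk a ha⟩

/-- If `MFN(g*, x*, y')` is feasible, there is a feasible flow in
which, for every client `k ∉ D_H`, all arcs incident to the node `k^s` carry zero flow
of every commodity. -/
theorem stmt_11
    (U : F → ℕ) (hU : ∀ i, 0 < U i)
    (xstar : F → D → ℝ) (ystar : F → ℝ)
    (hxs : ∀ i j, 0 ≤ xstar i j ∧ xstar i j ≤ 1)
    (hys : ∀ i, 0 ≤ ystar i ∧ ystar i ≤ 1)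
    (y' : F → ℝ) (hy' : ∀ i, y' i = if (1 / 4 : ℝ) ≤ ystar i then 1 else ystar i)
    (I : Finset F) (hI : ∀ i, i ∈ I ↔ y' i = 1)
    (z : F → D → ℝ)
    (hz0 : ∀ i j, 0 ≤ z i j)
    (hzx : ∀ i ∈ I, ∀ j, z i j ≤ 2 * xstar i j)
    (hzoff : ∀ i ∉ I, ∀ j, z i j = 0)
    (hz1 : ∀ j, ∑ i ∈ I, z i j ≤ 1)
    (hzU : ∀ i ∈ I, ∑ j, z i j ≤ (U i : ℝ))
    (hzmax : ∀ z' : F → D → ℝ, (∀ i j, 0 ≤ z' i j) →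
      (∀ i ∈ I, ∀ j, z' i j ≤ 2 * xstar i j) →
      (∀ j, ∑ i ∈ I, z' i j ≤ 1) → (∀ i ∈ I, ∑ j, z' i j ≤ (U i : ℝ)) →
      ∑ i ∈ I, ∑ j, z' i j ≤ ∑ i ∈ I, ∑ j, z i j)
    (gstar : F → D → ℝ)
    (hgstar : ∀ i j, gstar i j =
      if InIH I z xstar i then z i j
      else if i ∈ I ∧ ¬ InDH I z xstar j then z i j else 0)
    (hfeas : MFNFeasible U gstar xstar y') :
    ∃ f : D → MFNArc F D → ℝ, IsFeasibleFlow U gstar xstar y' f ∧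
      ∀ k : D, ¬ InDH I z xstar k → ∀ (j : D) (a : MFNArc F D),
        (MFNArc.tail a = MFNNode.src k ∨ MFNArc.head a = MFNNode.src k) →
        f j a = 0 :=
  stmt_11_general U xstar y' I hI z hz0 hz1 hzU gstar hgstar hfeas
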